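/- arXiv:2511.21593 — 4 statements merged into one kernel-verified Lean document; each statement's English description precedes it below -/
import Mathlib

section
/- Let R be an invertible real N×N matrix, S a symmetric real N×N matrix with S² = R⁻¹, P a real m×N matrix, v ∈ ℝ^m, q ≥ 0 a real number, and ψ ∈ ℝ^N a unit vector (ψᵀψ = 1). Assume the gradient condition S Pᵀ v = √q · ψ holds. Then the control u* = -R⁻¹Pᵀv satisfies u* = -√q · Sψ, and the Hamiltonian evaluates to zero: vᵀP u* + (1/2)q + (1/2)u*ᵀR u* = 0. -/
open Matrix

/-- Under the gradient condition `S Pᵀ v = √q • ψ` (with `S` symmetric,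
`S² = R⁻¹`, `ψᵀψ = 1`, `q ≥ 0`), the control `u* = -R⁻¹Pᵀv` equals `-√q • Sψ`
and the Hamiltonian evaluates to zero: `vᵀPu* + (1/2)q + (1/2)u*ᵀRu* = 0`. -/
theorem closed_form_control_hjb {N m : ℕ} (R S : Matrix (Fin N) (Fin N) ℝ)
    (hR : IsUnit R.det) (hSsymm : S.IsSymm) (hS2 : S * S = R⁻¹)
    (P : Matrix (Fin m) (Fin N) ℝ) (v : Fin m → ℝ) (q : ℝ) (hq : 0 ≤ q)
    (ψ : Fin N → ℝ) (hψ : ψ ⬝ᵥ ψ = 1)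
    (hgrad : S.mulVec (Pᵀ.mulVec v) = Real.sqrt q • ψ)
    (ustar : Fin N → ℝ) (hustar : ustar = -(R⁻¹.mulVec (Pᵀ.mulVec v))) :
    ustar = -(Real.sqrt q • S.mulVec ψ) ∧
    v ⬝ᵥ P.mulVec ustar + (1/2) * q + (1/2) * (ustar ⬝ᵥ R.mulVec ustar) = 0 := by
  set w := Pᵀ.mulVec v with hw
  have h1 : ustar = -(Real.sqrt q • S.mulVec ψ) := by
    rw [hustar, ← hS2]
    rw [← Matrix.mulVec_mulVec, hgrad, Matrix.mulVec_smul]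
  refine ⟨h1, ?_⟩
  have hvP : v ⬝ᵥ P.mulVec ustar = w ⬝ᵥ ustar := by
    rw [Matrix.dotProduct_mulVec, hw, ← Matrix.vecMul_transpose, Matrix.transpose_transpose]
  have hsq : Real.sqrt q * Real.sqrt q = q := Real.mul_self_sqrt hq
  have hSw : S.mulVec w = Real.sqrt q • ψ := hgrad
  have hwSψ : w ⬝ᵥ S.mulVec ψ = Real.sqrt q := by
    have : w ⬝ᵥ S.mulVec ψ = S.mulVec w ⬝ᵥ ψ := by
      rw [Matrix.dotProduct_mulVec, ← Matrix.mulVec_transpose, hSsymm.eq]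
    rw [this, hSw, smul_dotProduct, hψ, smul_eq_mul, mul_one]
  have hwu : w ⬝ᵥ ustar = -q := by
    rw [h1, dotProduct_neg, dotProduct_smul, hwSψ, smul_eq_mul, hsq]
  have hRu : R.mulVec ustar = -w := by
    rw [hustar, Matrix.mulVec_neg, Matrix.mulVec_mulVec, Matrix.mul_nonsing_inv _ hR,
      Matrix.one_mulVec]
  have huRu : ustar ⬝ᵥ R.mulVec ustar = q := by
    rw [hRu, dotProduct_neg, h1, neg_dotProduct, smul_dotProduct,
      dotProduct_comm, hwSψ, neg_neg, smul_eq_mul, hsq]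
  rw [hvP, hwu, huRu]; ring
end

section
/- Let R be a symmetric positive definite real N×N matrix, S a symmetric real N×N matrix with S² = R⁻¹, P a real m×N matrix, v ∈ ℝ^m, q ≥ 0 a real number, and ψ ∈ ℝ^N with ψᵀψ = 1. Assume S Pᵀ v = √q · ψ. Then u* = -R⁻¹Pᵀv is the unique global minimizer over u ∈ ℝ^N of the Hamiltonian H(u) = vᵀP u + (1/2)q + (1/2)uᵀR u, and min_u H(u) = 0; i.e., the HJB equation min_u {vᵀPu + (1/2)q + (1/2)uᵀRu} = 0 is satisfied. -/
/-!
With `w = Pᵀv` and `u* = -R⁻¹w`, completing the square gives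
`H(u) = ½ (u - u*)ᵀR(u - u*) + ½ (q - wᵀR⁻¹w)`, and the gradient condition forces
`wᵀR⁻¹w = wᵀS²w = |Sw|² = (√q)² |ψ|² = q`. So `H` is half the `R`-norm of `u - u*`,
which vanishes exactly at `u*` because `R` is positive definite.
-/

open Matrix

namespace Matrix

variable {n α : Type*} [Fintype n]

theorem dotProduct_mul_self_mulVec_of_isSymm [CommSemiring α] {S : Matrix n n α}
    (hS : S.IsSymm) (x : n → α) : x ⬝ᵥ (S * S) *ᵥ x = S *ᵥ x ⬝ᵥ S *ᵥ x := by
  rw [← mulVec_mulVec, dotProduct_mulVec, ← mulVec_transpose, hS.eq]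

theorem two_mul_dotProduct_add_dotProduct_mulVec_eq [CommRing α] {A : Matrix n n α}
    (hA : A.IsSymm) {c w : n → α} (hc : A *ᵥ c = -w) (u : n → α) :
    2 * (w ⬝ᵥ u) + u ⬝ᵥ A *ᵥ u = (u - c) ⬝ᵥ A *ᵥ (u - c) + w ⬝ᵥ c := by
  have hAu : c ⬝ᵥ A *ᵥ u = -(w ⬝ᵥ u) := by
    rw [dotProduct_mulVec, ← mulVec_transpose, hA.eq, hc, neg_dotProduct]
  rw [mulVec_sub, sub_dotProduct, dotProduct_sub, dotProduct_sub, hAu, hc,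
    dotProduct_neg, dotProduct_neg, dotProduct_comm u w, dotProduct_comm c w]
  ring

end Matrix

/-- For symmetric positive definite `R`, symmetric `S` with `S² = R⁻¹`,
`q ≥ 0`, `ψᵀψ = 1`, and the gradient condition `S Pᵀ v = √q • ψ`, the control
`u* = -R⁻¹Pᵀv` is the unique global minimizer of the Hamiltonian
`H(u) = vᵀPu + (1/2)q + (1/2)uᵀRu`, and the minimum value is `0`:
the HJB equation `min_u H(u) = 0` is satisfied. -/
theorem hjb_closed_form_solution {N m : ℕ} (R S : Matrix (Fin N) (Fin N) ℝ)
    (hR : R.PosDef) (hSsymm : S.IsSymm) (hS2 : S * S = R⁻¹)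
    (P : Matrix (Fin m) (Fin N) ℝ) (v : Fin m → ℝ) (q : ℝ) (hq : 0 ≤ q)
    (ψ : Fin N → ℝ) (hψ : ψ ⬝ᵥ ψ = 1)
    (hgrad : S.mulVec (Pᵀ.mulVec v) = Real.sqrt q • ψ)
    (H : (Fin N → ℝ) → ℝ)
    (hH : ∀ u, H u = v ⬝ᵥ P.mulVec u + (1/2) * q + (1/2) * (u ⬝ᵥ R.mulVec u))
    (ustar : Fin N → ℝ) (hustar : ustar = -(R⁻¹.mulVec (Pᵀ.mulVec v))) :
    (∀ u, H ustar ≤ H u) ∧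
    (∀ u, u ≠ ustar → H ustar < H u) ∧
    H ustar = 0 := by
  set w := Pᵀ *ᵥ v
  have hRu : R *ᵥ ustar = -w := by
    rw [hustar, mulVec_neg, mulVec_mulVec,
      mul_nonsing_inv R (isUnit_iff_ne_zero.mpr hR.det_pos.ne'), one_mulVec]
  have hwR : w ⬝ᵥ R⁻¹ *ᵥ w = q := by
    rw [← hS2, dotProduct_mul_self_mulVec_of_isSymm hSsymm, hgrad, smul_dotProduct,
      dotProduct_smul, hψ, smul_eq_mul, smul_eq_mul, mul_one, Real.mul_self_sqrt hq]
  have hH_sq : ∀ u, H u = (1/2) * ((u - ustar) ⬝ᵥ R *ᵥ (u - ustar)) := by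
    intro u
    have hvP : v ⬝ᵥ P *ᵥ u = w ⬝ᵥ u := by rw [dotProduct_mulVec, ← mulVec_transpose]
    have hwu : w ⬝ᵥ ustar = -q := by rw [hustar, dotProduct_neg, hwR]
    rw [hH, hvP]
    linear_combination (1/2) * two_mul_dotProduct_add_dotProduct_mulVec_eq
      (isHermitian_iff_isSymm.mp hR.isHermitian) hRu u + (1/2) * hwu
  have hH_ustar : H ustar = 0 := by simp [hH_sq]
  refine ⟨fun u => ?_, fun u hu => ?_, hH_ustar⟩
  · have hnonneg := hR.posSemidef.dotProduct_mulVec_nonneg (u - ustar)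
    simp only [star_trivial] at hnonneg
    rw [hH_ustar, hH_sq]
    positivity
  · have hpos := hR.dotProduct_mulVec_pos (sub_ne_zero.mpr hu)
    simp only [star_trivial] at hpos
    rw [hH_ustar, hH_sq]
    positivity
end

section
/- Let m, N be positive naturals, let F : ℝ^m → ℝ^m be of the form F(y) = P(y)·u*(y) where P : ℝ^m → (real m×N matrices) is any map, S is a symmetric positive definite real N×N matrix, q : ℝ^m → ℝ, and u*(y) = -√(q(y)) · S·(P(y)ᵀy)/‖P(y)ᵀy‖. Let I ⊆ ℝ be an interval and x : ℝ → ℝ^m be differentiable on I with x'(t) = F(x(t)) for all t ∈ I. If for every t ∈ I one has P(x(t))ᵀx(t) ≠ 0 and q(x(t)) > 0, then the function t ↦ ‖x(t)‖² is strictly decreasing on I. -/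
open Matrix

/-!
With `w = P(y)ᵀy`, the closed-loop velocity satisfies
`⟨y, P(y)u*(y)⟩ = ⟨w, u*(y)⟩ = -√(q y) ‖w‖⁻¹ ⟨w, S w⟩`, which is negative as soon as
`q y > 0`, `w ≠ 0` and `S` is positive definite. Hence the derivative `2⟨x, ẋ⟩` of
`‖x(t)‖²` is negative along the trajectory, and the mean value theorem finishes.
-/

theorem HasDerivWithinAt.dotProduct {𝕜 ι : Type*} [NontriviallyNormedField 𝕜] [Fintype ι]
    {f g : 𝕜 → ι → 𝕜} {f' g' : ι → 𝕜} {s : Set 𝕜} {t : 𝕜}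
    (hf : HasDerivWithinAt f f' s t) (hg : HasDerivWithinAt g g' s t) :
    HasDerivWithinAt (fun τ => f τ ⬝ᵥ g τ) (f' ⬝ᵥ g t + f t ⬝ᵥ g') s t := by
  have hsum := HasDerivWithinAt.fun_sum (u := Finset.univ) fun i _ =>
    (hasDerivWithinAt_pi.mp hf i).mul (hasDerivWithinAt_pi.mp hg i)
  exact hsum.congr_deriv Finset.sum_add_distrib

theorem HasDerivWithinAt.dotProduct_self {𝕜 ι : Type*} [NontriviallyNormedField 𝕜]
    [Fintype ι] {f : 𝕜 → ι → 𝕜} {f' : ι → 𝕜} {s : Set 𝕜} {t : 𝕜}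
    (hf : HasDerivWithinAt f f' s t) :
    HasDerivWithinAt (fun τ => f τ ⬝ᵥ f τ) (2 * (f t ⬝ᵥ f')) s t := by
  refine (hf.dotProduct hf).congr_deriv ?_
  rw [dotProduct_comm f']
  ring

section HJBControl

variable {m n : Type*} [Fintype m] [Fintype n]

/-- The feedback `u*(y)`, as a function of `w = P(y)ᵀy` and `c = q(y)`. -/
noncomputable def hjbControl (S : Matrix n n ℝ) (c : ℝ) (w : n → ℝ) : n → ℝ :=
  -(Real.sqrt c • S *ᵥ ((Real.sqrt (w ⬝ᵥ w))⁻¹ • w))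

theorem dotProduct_hjbControl_neg {S : Matrix n n ℝ} (hS : S.PosDef) {c : ℝ} (hc : 0 < c)
    {w : n → ℝ} (hw : w ≠ 0) : w ⬝ᵥ hjbControl S c w < 0 := by
  have hww : 0 < w ⬝ᵥ w := by
    simpa using (dotProduct_self_star_pos_iff (v := w)).mpr hw
  have hwSw : 0 < w ⬝ᵥ S *ᵥ w := by simpa using hS.dotProduct_mulVec_pos hw
  have hpos : 0 < Real.sqrt c * ((Real.sqrt (w ⬝ᵥ w))⁻¹ * (w ⬝ᵥ S *ᵥ w)) := by
    have := Real.sqrt_pos.mpr hww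
    positivity
  simpa only [hjbControl, dotProduct_neg, dotProduct_smul, mulVec_smul, smul_eq_mul,
    neg_neg_iff_pos] using hpos

theorem dotProduct_mulVec_hjbControl_neg {S : Matrix n n ℝ} (hS : S.PosDef) {c : ℝ}
    (hc : 0 < c) {A : Matrix m n ℝ} {y : m → ℝ} (hy : Aᵀ *ᵥ y ≠ 0) :
    y ⬝ᵥ A *ᵥ hjbControl S c (Aᵀ *ᵥ y) < 0 := by
  rw [dotProduct_mulVec, ← mulVec_transpose]
  exact dotProduct_hjbControl_neg hS hc hy

end HJBControl

theorem lyapunov_strict_decrease_general {m N : ℕ}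
    (P : (Fin m → ℝ) → Matrix (Fin m) (Fin N) ℝ)
    (S : Matrix (Fin N) (Fin N) ℝ) (hS : S.PosDef)
    (q : (Fin m → ℝ) → ℝ)
    (ustar : (Fin m → ℝ) → (Fin N → ℝ))
    (hustar : ∀ y, ustar y = -(Real.sqrt (q y) •
        S.mulVec ((Real.sqrt (((P y)ᵀ.mulVec y) ⬝ᵥ ((P y)ᵀ.mulVec y)))⁻¹
          • (P y)ᵀ.mulVec y)))
    (F : (Fin m → ℝ) → (Fin m → ℝ)) (hF : ∀ y, F y = (P y).mulVec (ustar y))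
    (I : Set ℝ) (hI : I.OrdConnected)
    (x : ℝ → (Fin m → ℝ))
    (hx : ∀ t ∈ I, HasDerivWithinAt x (F (x t)) I t)
    (hPx : ∀ t ∈ I, (P (x t))ᵀ.mulVec (x t) ≠ 0)
    (hq : ∀ t ∈ I, 0 < q (x t)) :
    StrictAntiOn (fun t => (x t) ⬝ᵥ (x t)) I := by
  have hF_eq : ∀ y, F y = P y *ᵥ hjbControl S (q y) ((P y)ᵀ *ᵥ y) := fun y => by
    rw [hF, hustar]
    rfl
  have hdecay : ∀ t ∈ I, 2 * (x t ⬝ᵥ F (x t)) < 0 := fun t ht => by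
    have := dotProduct_mulVec_hjbControl_neg hS (hq t ht) (hPx t ht)
    rw [hF_eq]
    linarith
  have hV : ∀ t ∈ I, HasDerivWithinAt (fun t => x t ⬝ᵥ x t) (2 * (x t ⬝ᵥ F (x t))) I t :=
    fun t ht => (hx t ht).dotProduct_self
  exact strictAntiOn_of_hasDerivWithinAt_neg hI.convex
    (fun t ht => (hV t ht).continuousWithinAt)
    (fun t ht => (hV t (interior_subset ht)).mono interior_subset)
    (fun t ht => hdecay t (interior_subset ht))

/-- Along any solution on an interval `I` of the closed-loop drift-free
system `ẋ = F(x) = P(x)u*(x)` with the closed-form HJB control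
`u*(y) = -√(q y) • S (P(y)ᵀy / ‖P(y)ᵀy‖)` (Euclidean norm `‖w‖ = √(w ⬝ᵥ w)`,
`S` symmetric positive definite), if `P(x(t))ᵀx(t) ≠ 0` and `q(x(t)) > 0` on `I`,
then `t ↦ ‖x(t)‖² = x(t) ⬝ᵥ x(t)` is strictly decreasing on `I`. -/
theorem lyapunov_strict_decrease {m N : ℕ} (hm : 0 < m) (hN : 0 < N)
    (P : (Fin m → ℝ) → Matrix (Fin m) (Fin N) ℝ)
    (S : Matrix (Fin N) (Fin N) ℝ) (hS : S.PosDef)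
    (q : (Fin m → ℝ) → ℝ)
    (ustar : (Fin m → ℝ) → (Fin N → ℝ))
    (hustar : ∀ y, ustar y = -(Real.sqrt (q y) •
        S.mulVec ((Real.sqrt (((P y)ᵀ.mulVec y) ⬝ᵥ ((P y)ᵀ.mulVec y)))⁻¹
          • (P y)ᵀ.mulVec y)))
    (F : (Fin m → ℝ) → (Fin m → ℝ)) (hF : ∀ y, F y = (P y).mulVec (ustar y))
    (I : Set ℝ) (hI : I.OrdConnected)
    (x : ℝ → (Fin m → ℝ))
    (hx : ∀ t ∈ I, HasDerivWithinAt x (F (x t)) I t)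
    (hPx : ∀ t ∈ I, (P (x t))ᵀ.mulVec (x t) ≠ 0)
    (hq : ∀ t ∈ I, 0 < q (x t)) :
    StrictAntiOn (fun t => (x t) ⬝ᵥ (x t)) I :=
  lyapunov_strict_decrease_general P S hS q ustar hustar F hF I hI x hx hPx hq
end

section
/- Let P_e be a real m×N matrix, S a symmetric positive definite real N×N matrix, e ∈ ℝ^m with P_eᵀe ≠ 0, and q > 0 a real number. Define ψ = P_eᵀe/‖P_eᵀe‖ and u*_e = -√q · Sψ. Then eᵀ(P_e u*_e) = -√q · (eᵀ P_e S P_eᵀ e)/‖P_eᵀe‖ < 0. -/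
open Matrix

/-- With `S` symmetric positive definite, `P_eᵀe ≠ 0`, `q > 0`,
`ψ = P_eᵀe/‖P_eᵀe‖` (Euclidean norm `‖w‖ = √(w ⬝ᵥ w)`) and `u*_e = -√q • Sψ`,
the Lyapunov derivative along the error dynamics satisfies
`eᵀ(P_e u*_e) = -√q (eᵀ P_e S P_eᵀ e)/‖P_eᵀe‖ < 0`. -/
theorem tracking_lyapunov_derivative {m N : ℕ} (Pe : Matrix (Fin m) (Fin N) ℝ)
    (S : Matrix (Fin N) (Fin N) ℝ) (hS : S.PosDef)
    (e : Fin m → ℝ) (he : Peᵀ.mulVec e ≠ 0) (q : ℝ) (hq : 0 < q)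
    (ψ ue : Fin N → ℝ)
    (hψ : ψ = (Real.sqrt ((Peᵀ.mulVec e) ⬝ᵥ (Peᵀ.mulVec e)))⁻¹ • Peᵀ.mulVec e)
    (hue : ue = -(Real.sqrt q • S.mulVec ψ)) :
    e ⬝ᵥ Pe.mulVec ue
      = -(Real.sqrt q * (e ⬝ᵥ (Pe * S * Peᵀ).mulVec e)
          / Real.sqrt ((Peᵀ.mulVec e) ⬝ᵥ (Peᵀ.mulVec e))) ∧
    e ⬝ᵥ Pe.mulVec ue < 0 := by
  set w := Peᵀ.mulVec e with hw
  have h0 : w ⬝ᵥ w ≠ 0 := fun h => he (dotProduct_self_eq_zero.mp h)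
  have hnn : (0:ℝ) ≤ w ⬝ᵥ w := Finset.sum_nonneg fun i _ => mul_self_nonneg _
  have hww : 0 < w ⬝ᵥ w := lt_of_le_of_ne hnn (Ne.symm h0)
  have hwSw : 0 < w ⬝ᵥ S.mulVec w := by
    have := hS.re_dotProduct_pos (x := w) he
    simpa using this
  have hsq : 0 < Real.sqrt (w ⬝ᵥ w) := Real.sqrt_pos.mpr hww
  have key : e ⬝ᵥ Pe.mulVec (S.mulVec w) = w ⬝ᵥ S.mulVec w := by
    rw [Matrix.dotProduct_mulVec, ← Matrix.mulVec_transpose, ← hw]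
  have hquad : e ⬝ᵥ (Pe * S * Peᵀ).mulVec e = w ⬝ᵥ S.mulVec w := by
    rw [← Matrix.mulVec_mulVec, ← Matrix.mulVec_mulVec, ← hw, key]
  have hmain : e ⬝ᵥ Pe.mulVec ue
      = -(Real.sqrt q * (e ⬝ᵥ (Pe * S * Peᵀ).mulVec e) / Real.sqrt (w ⬝ᵥ w)) := by
    rw [hquad, hue, hψ]
    simp only [Matrix.mulVec_neg, Matrix.mulVec_smul, dotProduct_neg, dotProduct_smul,
      smul_eq_mul, key]
    field_simp
  refine ⟨hmain, ?_⟩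
  rw [hmain]
  have hpos : 0 < Real.sqrt q * (e ⬝ᵥ (Pe * S * Peᵀ).mulVec e) / Real.sqrt (w ⬝ᵥ w) := by
    rw [hquad]; positivity
  linarith
end
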